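/- Let a ∈ ℝ, p > 1, T > 0, R ≥ 1, and let U : ℝ × [0,T] → ℝ be continuous with supp U ⊂ {|x| ≤ t + R}. Define L'_a(|U|^p)(x,t) = (1/2)∫_0^t |U(x+t-s,s)|^p {1+(x+t-s)²}^{-(1+a)/2} ds + (1/2)∫_0^t |U(x-t+s,s)|^p {1+(x-t+s)²}^{-(1+a)/2} ds. Then there exists C > 0 independent of T and U such that sup_{ℝ×[0,T]} |L'_a(|U|^p)| ≤ C E_a(T) (sup|U|)^p, where E_a(T) = (T+2R)^{-a} if a < 0, E_a(T) = log(T+2R) if a = 0, and E_a(T) = 1 if a > 0. -/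
import Mathlib

open MeasureTheory intervalIntegral Set

private lemma cont_h (e : ℝ) : Continuous (fun z : ℝ => (1 + z ^ 2) ^ e) := by
  apply Continuous.rpow_const (by continuity)
  intro z; left; positivity

private lemma h_nonneg (e z : ℝ) : 0 ≤ (1 + z ^ 2) ^ e :=
  Real.rpow_nonneg (by positivity) e

private lemma pw_small (e z : ℝ) (h1 : z ^ 2 ≤ 1) : (1 + z ^ 2) ^ e ≤ 2 ^ |e| := by
  rcases le_or_gt 0 e with he | he
  · calc (1 + z ^ 2) ^ e ≤ 2 ^ e := Real.rpow_le_rpow (by positivity) (by linarith) he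
      _ ≤ 2 ^ |e| := Real.rpow_le_rpow_of_exponent_le one_le_two (le_abs_self e)
  · calc (1 + z ^ 2) ^ e ≤ 1 :=
        Real.rpow_le_one_of_one_le_of_nonpos (by nlinarith [sq_nonneg z]) he.le
      _ ≤ 2 ^ |e| := Real.one_le_rpow one_le_two (abs_nonneg e)

private lemma pw_big (e z : ℝ) (hz : 1 ≤ z) : (1 + z ^ 2) ^ e ≤ 2 ^ |e| * z ^ (2 * e) := by
  have hz0 : (0:ℝ) < z := by linarith
  have hz2 : z ^ (2 * e) = (z ^ 2) ^ e := by
    rw [← Real.rpow_natCast z 2, ← Real.rpow_mul hz0.le]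
    norm_num [mul_comm]
  rcases le_or_gt 0 e with he | he
  · calc (1 + z ^ 2) ^ e ≤ (2 * z ^ 2) ^ e :=
        Real.rpow_le_rpow (by positivity) (by nlinarith) he
      _ = 2 ^ e * (z ^ 2) ^ e := Real.mul_rpow (by norm_num) (by positivity)
      _ ≤ 2 ^ |e| * z ^ (2 * e) := by
          rw [hz2]
          have := Real.rpow_le_rpow_of_exponent_le (x := (2:ℝ)) one_le_two (le_abs_self e)
          nlinarith [Real.rpow_nonneg (show (0:ℝ) ≤ z ^ 2 by positivity) e,
            Real.rpow_pos_of_pos (show (0:ℝ) < 2 by norm_num) e]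
  · have h1 : (1 + z ^ 2) ^ e ≤ (z ^ 2) ^ e :=
      Real.rpow_le_rpow_of_nonpos (by positivity) (by nlinarith) he.le
    have h2 : (1:ℝ) ≤ 2 ^ |e| := Real.one_le_rpow one_le_two (abs_nonneg e)
    calc (1 + z ^ 2) ^ e ≤ (z ^ 2) ^ e := h1
      _ = z ^ (2 * e) := hz2.symm
      _ ≤ 2 ^ |e| * z ^ (2 * e) := by
          nlinarith [Real.rpow_nonneg hz0.le (2 * e)]

private lemma key_main (e : ℝ) : ∀ Z : ℝ, 2 ≤ Z →
    (∫ z in (-Z)..Z, (1 + z ^ 2) ^ e) ≤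
      2 * 2 ^ |e| + 2 * (2 ^ |e| * ∫ z in (1:ℝ)..Z, z ^ (2 * e)) := by
  intro Z hZ
  have hZ0 : (0:ℝ) ≤ Z := by linarith
  have hint : ∀ α β : ℝ, IntervalIntegrable (fun z : ℝ => (1 + z ^ 2) ^ e) volume α β :=
    fun α β => (cont_h e).intervalIntegrable α β
  have hrint : IntervalIntegrable (fun z : ℝ => z ^ (2 * e)) volume 1 Z :=
    intervalIntegral.intervalIntegrable_rpow
      (Or.inr (Set.notMem_uIcc_of_lt one_pos (by linarith)))
  have hsplit : (∫ z in (-Z)..Z, (1 + z ^ 2) ^ e)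
      = (∫ z in (-Z)..(0:ℝ), (1 + z ^ 2) ^ e) + ∫ z in (0:ℝ)..Z, (1 + z ^ 2) ^ e :=
    (integral_add_adjacent_intervals (hint _ _) (hint _ _)).symm
  have hneg : (∫ z in (-Z)..(0:ℝ), (1 + z ^ 2) ^ e) = ∫ z in (0:ℝ)..Z, (1 + z ^ 2) ^ e := by
    have := intervalIntegral.integral_comp_neg (a := (0:ℝ)) (b := Z)
      (fun z : ℝ => (1 + z ^ 2) ^ e)
    simp only [neg_sq, neg_zero] at this
    exact this.symm
  have hsplit2 : (∫ z in (0:ℝ)..Z, (1 + z ^ 2) ^ e)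
      = (∫ z in (0:ℝ)..(1:ℝ), (1 + z ^ 2) ^ e) + ∫ z in (1:ℝ)..Z, (1 + z ^ 2) ^ e :=
    (integral_add_adjacent_intervals (hint _ _) (hint _ _)).symm
  have h01 : (∫ z in (0:ℝ)..(1:ℝ), (1 + z ^ 2) ^ e) ≤ 2 ^ |e| := by
    have := intervalIntegral.integral_mono_on (μ := volume) (a := (0:ℝ)) (b := 1)
      (f := fun z : ℝ => (1 + z ^ 2) ^ e) (g := fun _ : ℝ => (2:ℝ) ^ |e|)
      (by norm_num) (hint _ _) (intervalIntegrable_const)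
      (fun z hz => pw_small e z (by nlinarith [hz.1, hz.2]))
    simpa using this
  have h1Z : (∫ z in (1:ℝ)..Z, (1 + z ^ 2) ^ e) ≤ 2 ^ |e| * ∫ z in (1:ℝ)..Z, z ^ (2 * e) := by
    have := intervalIntegral.integral_mono_on (μ := volume) (a := (1:ℝ)) (b := Z)
      (f := fun z : ℝ => (1 + z ^ 2) ^ e) (g := fun z : ℝ => 2 ^ |e| * z ^ (2 * e))
      (by linarith) (hint _ _) (hrint.const_mul _)
      (fun z hz => pw_big e z hz.1)
    rwa [intervalIntegral.integral_const_mul] at this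
  linarith

private lemma key (a : ℝ) : ∃ C₀ > 0, ∀ Z : ℝ, 2 ≤ Z →
    (∫ z in (-Z)..Z, (1 + z ^ 2) ^ (-(1 + a) / 2)) ≤
      C₀ * (if a < 0 then Z ^ (-a) else if a = 0 then Real.log Z else 1) := by
  set e := -(1 + a) / 2 with he
  have hK : (0:ℝ) < 2 ^ |e| := Real.rpow_pos_of_pos two_pos _
  rcases lt_trichotomy a 0 with ha | ha | ha
  · -- a < 0
    have hia : (0:ℝ) < (-a)⁻¹ := inv_pos.mpr (by linarith)
    refine ⟨2 * 2 ^ |e| * (1 + (-a)⁻¹) + 1, by nlinarith, ?_⟩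
    intro Z hZ
    rw [if_pos ha]
    have hmain := key_main e Z hZ
    have hB : (∫ z in (1:ℝ)..Z, z ^ (2 * e)) = (Z ^ (-a) - 1) * (-a)⁻¹ := by
      rw [integral_rpow (Or.inl (by rw [he]; linarith))]
      rw [Real.one_rpow]
      rw [show 2 * e + 1 = -a by rw [he]; ring]
      rw [div_eq_mul_inv]
    rw [hB] at hmain
    have hW : (1:ℝ) ≤ Z ^ (-a) := Real.one_le_rpow (by linarith) (by linarith)
    nlinarith [mul_pos hK hia, mul_nonneg (mul_nonneg hK.le hia.le) (sub_nonneg.mpr hW)]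
  · -- a = 0
    subst ha
    have hl2 : (0:ℝ) < Real.log 2 := Real.log_pos one_lt_two
    refine ⟨2 * 2 ^ |e| * ((Real.log 2)⁻¹ + 1) + 1, by positivity, ?_⟩
    intro Z hZ
    rw [if_neg (lt_irrefl 0), if_pos rfl]
    have hmain := key_main e Z hZ
    have hB : (∫ z in (1:ℝ)..Z, z ^ (2 * e)) = Real.log Z := by
      have h2e : (2:ℝ) * e = -1 := by rw [he]; ring
      rw [h2e]
      rw [show (fun z : ℝ => z ^ (-1:ℝ)) = fun z : ℝ => z⁻¹ by
        funext z; rw [Real.rpow_neg_one]]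
      rw [integral_inv (Set.notMem_uIcc_of_lt one_pos (by linarith))]
      rw [div_one]
    rw [hB] at hmain
    have hlZ : Real.log 2 ≤ Real.log Z := Real.log_le_log (by norm_num) hZ
    have hinv : (Real.log 2)⁻¹ * Real.log 2 = 1 := inv_mul_cancel₀ hl2.ne'
    have h1 : (1:ℝ) ≤ (Real.log 2)⁻¹ * Real.log Z := by
      calc (1:ℝ) = (Real.log 2)⁻¹ * Real.log 2 := hinv.symm
        _ ≤ _ := mul_le_mul_of_nonneg_left hlZ (by positivity)
    have h2 := mul_le_mul_of_nonneg_left h1 (by positivity : (0:ℝ) ≤ 2 * 2 ^ |e|)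
    have hL0 : 0 < Real.log Z := lt_of_lt_of_le hl2 hlZ
    have goal : 2 * 2 ^ |e| + 2 * (2 ^ |e| * Real.log Z) ≤
        (2 * 2 ^ |e| * ((Real.log 2)⁻¹ + 1) + 1) * Real.log Z := by nlinarith [h2, hL0]
    exact hmain.trans goal
  · -- a > 0
    refine ⟨2 * 2 ^ |e| * (1 + a⁻¹) + 1, by positivity, ?_⟩
    intro Z hZ
    rw [if_neg (by linarith), if_neg (by linarith)]
    have hmain := key_main e Z hZ
    have hB : (∫ z in (1:ℝ)..Z, z ^ (2 * e)) = (Z ^ (-a) - 1) * (-a)⁻¹ := by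
      rw [integral_rpow (Or.inr ⟨by rw [he]; intro h; apply absurd h; intro h'; nlinarith [h'],
        Set.notMem_uIcc_of_lt one_pos (by linarith)⟩)]
      rw [Real.one_rpow]
      rw [show 2 * e + 1 = -a by rw [he]; ring]
      rw [div_eq_mul_inv]
    rw [hB] at hmain
    have hW0 : (0:ℝ) ≤ Z ^ (-a) := Real.rpow_nonneg (by linarith) _
    have hW1 : Z ^ (-a) ≤ 1 := Real.rpow_le_one_of_one_le_of_nonpos (by linarith) (by linarith)
    have hia : (0:ℝ) < a⁻¹ := inv_pos.mpr ha
    have : (Z ^ (-a) - 1) * (-a)⁻¹ ≤ a⁻¹ := by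
      rw [show (-a)⁻¹ = -a⁻¹ by rw [inv_neg]]
      nlinarith
    nlinarith

theorem stmt_15 (a p R : ℝ) (hp : 1 < p) (hR : 1 ≤ R) :
    ∃ C > 0, ∀ T > (0 : ℝ), ∀ U : ℝ × ℝ → ℝ, Continuous U →
      (∀ y s, U (y, s) ≠ 0 → |y| ≤ s + R) →
      ∀ M ≥ (0 : ℝ), (∀ y s, |U (y, s)| ≤ M) →
      ∀ x t : ℝ, 0 ≤ t → t ≤ T →
        |(1 / 2) * (∫ s in (0 : ℝ)..t,
              |U (x + t - s, s)| ^ p * (1 + (x + t - s) ^ 2) ^ (-(1 + a) / 2)) +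
          (1 / 2) * (∫ s in (0 : ℝ)..t,
              |U (x - t + s, s)| ^ p * (1 + (x - t + s) ^ 2) ^ (-(1 + a) / 2))| ≤
        C * (if a < 0 then (T + 2 * R) ^ (-a) else
             if a = 0 then Real.log (T + 2 * R) else 1) * M ^ p := by
  obtain ⟨C₀, hC₀, hkey⟩ := key a
  refine ⟨C₀, hC₀, ?_⟩
  intro T hT U hU hsupp M hM hUM x t ht htT
  set e := -(1 + a) / 2 with he
  set Z := T + 2 * R with hZdef
  set E := (if a < 0 then Z ^ (-a) else if a = 0 then Real.log Z else 1) with hE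
  have hZ2 : (2:ℝ) ≤ Z := by rw [hZdef]; linarith
  have hZpos : (0:ℝ) < Z := by linarith
  have hTR : T + R ≤ Z := by rw [hZdef]; linarith
  have hTR0 : (0:ℝ) ≤ T + R := by linarith
  set S : Set ℝ := Icc (-(T + R)) (T + R) with hS
  set g : ℝ → ℝ := S.indicator (fun z => (1 + z ^ 2) ^ e) with hg
  have hgnn : ∀ z, 0 ≤ g z := fun z =>
    Set.indicator_nonneg (fun w _ => h_nonneg e w) z
  have hgint : ∀ α β : ℝ, IntervalIntegrable g volume α β := by
    intro α β
    exact intervalIntegrable_iff.mpr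
      ((((cont_h e).intervalIntegrable α β).def').indicator measurableSet_Icc)
  -- pointwise bound
  have hpt : ∀ (z s : ℝ), 0 ≤ s → s ≤ t →
      |U (z, s)| ^ p * (1 + z ^ 2) ^ e ≤ M ^ p * g z := by
    intro z s hs0 hst
    by_cases h0 : U (z, s) = 0
    · rw [h0]
      simp only [abs_zero]
      rw [Real.zero_rpow (by positivity : p ≠ 0), zero_mul]
      exact mul_nonneg (Real.rpow_nonneg hM p) (hgnn z)
    · have hz : z ∈ S := by
        have h1 := hsupp z s h0
        have h2 := abs_le.mp (by linarith [h1] : |z| ≤ T + R)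
        exact ⟨by linarith [h2.1], h2.2⟩
      rw [hg, Set.indicator_of_mem hz]
      exact mul_le_mul_of_nonneg_right
        (Real.rpow_le_rpow (abs_nonneg _) (hUM z s) (by linarith)) (h_nonneg e z)
  -- interval integral of g over any interval is bounded by J
  set J := ∫ z in (-Z)..Z, (1 + z ^ 2) ^ e with hJ
  have hIZ : ∀ α β : ℝ, α ≤ β → (∫ z in α..β, g z) ≤ J := by
    intro α β hab
    set m := min α (-Z) with hm
    set m' := max β Z with hm'
    have hmm' : m ≤ m' := le_trans (min_le_right _ _)
      (le_trans (by linarith) (le_max_right β Z))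
    have h1 : (∫ z in α..β, g z) ≤ ∫ z in m..m', g z :=
      integral_mono_interval (min_le_left _ _) hab (le_max_left _ _)
        (Filter.Eventually.of_forall hgnn) (hgint _ _)
    have hsub1 : S ⊆ Set.Ioc (-Z) Z := by
      intro z hz
      rw [hS] at hz
      exact ⟨by linarith [hz.1], le_trans hz.2 hTR⟩
    have hsub2 : Set.Ioc m m' ∩ S ⊆ Set.Ioc (-Z) Z := fun z hz => hsub1 hz.2
    have h2 : (∫ z in m..m', g z) = ∫ z in Set.Ioc m m' ∩ S, (1 + z ^ 2) ^ e := by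
      rw [intervalIntegral.integral_of_le hmm', hg,
        MeasureTheory.setIntegral_indicator measurableSet_Icc]
    have h3 : (∫ z in Set.Ioc m m' ∩ S, (1 + z ^ 2) ^ e) ≤
        ∫ z in Set.Ioc (-Z) Z, (1 + z ^ 2) ^ e := by
      apply MeasureTheory.setIntegral_mono_set
      · exact ((cont_h e).intervalIntegrable (-Z) Z).def' |>.mono_set
          (by rw [Set.uIoc_of_le (by linarith : -Z ≤ Z)])
      · exact Filter.Eventually.of_forall (fun z => h_nonneg e z)
      · exact (HasSubset.Subset.eventuallyLE hsub2)
    have h4 : (∫ z in Set.Ioc (-Z) Z, (1 + z ^ 2) ^ e) = J := by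
      rw [hJ, intervalIntegral.integral_of_le (by linarith : -Z ≤ Z)]
    linarith
  -- continuity of the integrands
  have hc1 : Continuous fun s : ℝ => x + t - s := continuous_const.sub continuous_id
  have hc2 : Continuous fun s : ℝ => x - t + s := continuous_const.add continuous_id
  have hcont1 : Continuous fun s : ℝ => |U (x + t - s, s)| ^ p * (1 + (x + t - s) ^ 2) ^ e := by
    apply Continuous.mul
    · apply Continuous.rpow_const ((hU.comp (hc1.prodMk continuous_id)).abs)
      intro s; right; linarith
    · exact (cont_h e).comp hc1
  have hcont2 : Continuous fun s : ℝ => |U (x - t + s, s)| ^ p * (1 + (x - t + s) ^ 2) ^ e := by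
    apply Continuous.mul
    · apply Continuous.rpow_const ((hU.comp (hc2.prodMk continuous_id)).abs)
      intro s; right; linarith
    · exact (cont_h e).comp hc2
  -- integrability of comp'd g
  have hgc1 : IntervalIntegrable (fun s : ℝ => M ^ p * g (x + t - s)) volume 0 t := by
    have := ((hgint x (x + t)).comp_sub_left (x + t)).const_mul (M ^ p)
    have e1 : x + t - x = t := by ring
    have e2 : x + t - (x + t) = 0 := by ring
    rw [e1, e2] at this
    exact this.symm
  have hgc2 : IntervalIntegrable (fun s : ℝ => M ^ p * g (x - t + s)) volume 0 t := by
    have := ((hgint (x - t) x).comp_add_left (x - t)).const_mul (M ^ p)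
    have e1 : (x - t) - (x - t) = 0 := by ring
    have e2 : x - (x - t) = t := by ring
    rw [e1, e2] at this
    exact this
  -- bound integral 1
  have hI1 : (∫ s in (0:ℝ)..t, |U (x + t - s, s)| ^ p * (1 + (x + t - s) ^ 2) ^ e)
      ≤ M ^ p * J := by
    have step1 : (∫ s in (0:ℝ)..t, |U (x + t - s, s)| ^ p * (1 + (x + t - s) ^ 2) ^ e)
        ≤ ∫ s in (0:ℝ)..t, M ^ p * g (x + t - s) :=
      intervalIntegral.integral_mono_on ht (hcont1.intervalIntegrable _ _) hgc1
        (fun s hs => hpt _ s hs.1 hs.2)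
    have step2 : (∫ s in (0:ℝ)..t, M ^ p * g (x + t - s)) = M ^ p * ∫ z in x..(x + t), g z := by
      rw [intervalIntegral.integral_const_mul]
      congr 1
      have := intervalIntegral.integral_comp_sub_left (a := (0:ℝ)) (b := t) g (x + t)
      rw [this]
      congr 1 <;> ring
    have step3 : (∫ z in x..(x + t), g z) ≤ J := hIZ x (x + t) (by linarith)
    calc _ ≤ ∫ s in (0:ℝ)..t, M ^ p * g (x + t - s) := step1
      _ = M ^ p * ∫ z in x..(x + t), g z := step2
      _ ≤ M ^ p * J := mul_le_mul_of_nonneg_left step3 (Real.rpow_nonneg hM p)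
  -- bound integral 2
  have hI2 : (∫ s in (0:ℝ)..t, |U (x - t + s, s)| ^ p * (1 + (x - t + s) ^ 2) ^ e)
      ≤ M ^ p * J := by
    have step1 : (∫ s in (0:ℝ)..t, |U (x - t + s, s)| ^ p * (1 + (x - t + s) ^ 2) ^ e)
        ≤ ∫ s in (0:ℝ)..t, M ^ p * g (x - t + s) :=
      intervalIntegral.integral_mono_on ht (hcont2.intervalIntegrable _ _) hgc2
        (fun s hs => hpt _ s hs.1 hs.2)
    have step2 : (∫ s in (0:ℝ)..t, M ^ p * g (x - t + s)) = M ^ p * ∫ z in (x - t)..x, g z := by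
      rw [intervalIntegral.integral_const_mul]
      congr 1
      have := intervalIntegral.integral_comp_add_left (a := (0:ℝ)) (b := t) g (x - t)
      rw [this]
      congr 1 <;> ring
    have step3 : (∫ z in (x - t)..x, g z) ≤ J := hIZ (x - t) x (by linarith)
    calc _ ≤ ∫ s in (0:ℝ)..t, M ^ p * g (x - t + s) := step1
      _ = M ^ p * ∫ z in (x - t)..x, g z := step2
      _ ≤ M ^ p * J := mul_le_mul_of_nonneg_left step3 (Real.rpow_nonneg hM p)
  -- nonnegativity of the two integrals
  have hnn1 : (0:ℝ) ≤ ∫ s in (0:ℝ)..t, |U (x + t - s, s)| ^ p * (1 + (x + t - s) ^ 2) ^ e :=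
    intervalIntegral.integral_nonneg ht
      (fun s _ => mul_nonneg (Real.rpow_nonneg (abs_nonneg _) p) (h_nonneg e _))
  have hnn2 : (0:ℝ) ≤ ∫ s in (0:ℝ)..t, |U (x - t + s, s)| ^ p * (1 + (x - t + s) ^ 2) ^ e :=
    intervalIntegral.integral_nonneg ht
      (fun s _ => mul_nonneg (Real.rpow_nonneg (abs_nonneg _) p) (h_nonneg e _))
  have hJE : J ≤ C₀ * E := hkey Z hZ2
  rw [abs_of_nonneg (by linarith)]
  have hfin : M ^ p * J ≤ C₀ * E * M ^ p := by
    calc M ^ p * J ≤ M ^ p * (C₀ * E) :=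
          mul_le_mul_of_nonneg_left hJE (Real.rpow_nonneg hM p)
      _ = C₀ * E * M ^ p := by ring
  linarith
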